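/- Let (Λ_j, T_j)_{j ∈ -ℕ} be an inverse sequence where each Λ_j is the nonnegative cone in ℝ^{d_j} and T_j is a nonnegative linear map, and suppose there is a strictly decreasing sequence of indices (J_k) with d_{J_k} = d for all k and a fixed positive d × d matrix L with L = T_{J_{2k-1}} ∘ ⋯ ∘ T_{J_{2k}} for every k. Then the inverse limit of the sequence of cones is at most one-dimensional: any two elements are nonnegative scalar multiples of a common element. -/

import Mathlib

/-!
Let `u, v` be nonnegative elements of the inverse limit with `v ≠ 0`, and call scalars `s ≤ t` a
sandwich at level `j` when `s • v j ≤ u j ≤ t • v j`. Sandwiches descend to shallower levels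
because the connecting maps are monotone. If the entries in each column of the positive matrix
`L` are within a factor `ρ` of each other, then `L` turns any pair of nonnegative vectors into a
sandwich of ratio `ρ⁴`, and shrinks the width `t - s` of any sandwich by the factor `1 - ρ⁻²`
(Birkhoff's contraction). Starting deep enough and passing through `m` copies of `L`, every level
carries a sandwich of width at most `(1 - ρ⁻²)ᵐ ρ⁴ c` around the ratio `c` of `u` and `v` at a
fixed coordinate where `v` is positive, so `u = c • v`.
-/
/-- Composition of the connecting linear maps from level `i + k` down to
level `i`: `compFrom d A i 0 = id` and
`compFrom d A i (k+1) = compFrom d A i k ∘ A (i+k)`. -/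
def compFrom (d : ℕ → ℕ)
    (A : ∀ j, (Fin (d (j + 1)) → ℝ) →ₗ[ℝ] (Fin (d j) → ℝ)) (i : ℕ) :
    ∀ k : ℕ, (Fin (d (i + k)) → ℝ) →ₗ[ℝ] (Fin (d i) → ℝ)
  | 0 => LinearMap.id
  | k + 1 => (compFrom d A i k).comp (A (i + k))

open Set Matrix Filter Topology

theorem Matrix.exists_apply_le_mul_apply_of_pos {n : Type*} [Finite n] {L : Matrix n n ℝ}
    (hL : ∀ i j, 0 < L i j) : ∃ ρ : ℝ, 1 ≤ ρ ∧ ∀ i j k, L i k ≤ ρ * L j k := by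
  obtain ⟨M, hM⟩ := Finite.exists_le fun p : n × n × n => L p.1 p.2.2 / L p.2.1 p.2.2
  refine ⟨max M 1, le_max_right _ _, fun i j k => ?_⟩
  rw [← div_le_iff₀ (hL j k)]
  exact (hM (i, j, k)).trans (le_max_left _ _)

namespace Matrix

variable {n : Type*} [Fintype n] {L : Matrix n n ℝ} {ρ : ℝ}

theorem mulVec_nonneg (hL : ∀ i j, 0 ≤ L i j) {x : n → ℝ} (hx : 0 ≤ x) : 0 ≤ L *ᵥ x :=
  fun i => Finset.sum_nonneg fun k _ => mul_nonneg (hL i k) (hx k)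

theorem mulVec_pos (hL : ∀ i j, 0 < L i j) {x : n → ℝ} (hx : 0 ≤ x) (hx0 : x ≠ 0) (i : n) :
    0 < (L *ᵥ x) i := by
  obtain ⟨k, hk⟩ := Function.ne_iff.1 hx0
  exact Finset.sum_pos' (fun k _ => mul_nonneg (hL i k).le (hx k))
    ⟨k, Finset.mem_univ _, mul_pos (hL i k) ((hx k).lt_of_ne' hk)⟩

theorem mulVec_apply_le_mul_mulVec_apply (hρ : ∀ i j k, L i k ≤ ρ * L j k) {x : n → ℝ}
    (hx : 0 ≤ x) (i j : n) : (L *ᵥ x) i ≤ ρ * (L *ᵥ x) j := by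
  simp only [mulVec, dotProduct, Finset.mul_sum, ← mul_assoc]
  exact Finset.sum_le_sum fun k _ => mul_le_mul_of_nonneg_right (hρ i j k) (hx k)

theorem smul_mulVec_le_mulVec (hL : ∀ i j, 0 ≤ L i j) (hρ0 : 0 < ρ)
    (hρ : ∀ i j k, L i k ≤ ρ * L j k) {b r : n → ℝ} (hb : 0 ≤ b) (hr : 0 ≤ r) {j : n}
    (hbj : 0 < (L *ᵥ b) j) : ((ρ ^ 2)⁻¹ * ((L *ᵥ r) j / (L *ᵥ b) j)) • (L *ᵥ b) ≤ L *ᵥ r := by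
  intro i
  have hrj : 0 ≤ (L *ᵥ r) j := mulVec_nonneg hL hr j
  calc (ρ ^ 2)⁻¹ * ((L *ᵥ r) j / (L *ᵥ b) j) * (L *ᵥ b) i
      ≤ (ρ ^ 2)⁻¹ * ((L *ᵥ r) j / (L *ᵥ b) j) * (ρ * (L *ᵥ b) j) := by
        gcongr; exact mulVec_apply_le_mul_mulVec_apply hρ hb i j
    _ = ρ⁻¹ * (L *ᵥ r) j := by field_simp
    _ ≤ (L *ᵥ r) i := by
        rw [inv_mul_le_iff₀ hρ0]; exact mulVec_apply_le_mul_mulVec_apply hρ hr j i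

theorem exists_mulVec_mem_Icc_smul (hL : ∀ i j, 0 < L i j) (hρ0 : 0 < ρ)
    (hρ : ∀ i j k, L i k ≤ ρ * L j k) {a b : n → ℝ} (ha : 0 ≤ a) (hb : 0 ≤ b) (hb0 : b ≠ 0) :
    ∃ s, 0 ≤ s ∧ L *ᵥ a ∈ Icc (s • (L *ᵥ b)) ((ρ ^ 4 * s) • (L *ᵥ b)) := by
  obtain ⟨j, -⟩ := Function.ne_iff.1 hb0
  have hbj := mulVec_pos hL hb hb0 j
  have haj : 0 ≤ (L *ᵥ a) j := mulVec_nonneg (fun i j => (hL i j).le) ha j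
  refine ⟨(ρ ^ 2)⁻¹ * ((L *ᵥ a) j / (L *ᵥ b) j), by positivity,
    smul_mulVec_le_mulVec (fun i j => (hL i j).le) hρ0 hρ hb ha hbj, fun i => ?_⟩
  calc (L *ᵥ a) i ≤ ρ * (L *ᵥ a) j := mulVec_apply_le_mul_mulVec_apply hρ ha i j
    _ = ρ * ((L *ᵥ a) j / (L *ᵥ b) j) * (L *ᵥ b) j := by field_simp
    _ ≤ ρ * ((L *ᵥ a) j / (L *ᵥ b) j) * (ρ * (L *ᵥ b) i) := by
        gcongr; exact mulVec_apply_le_mul_mulVec_apply hρ hb j i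
    _ = ρ ^ 4 * ((ρ ^ 2)⁻¹ * ((L *ᵥ a) j / (L *ᵥ b) j)) * (L *ᵥ b) i := by
        field_simp

/-- Write `a = s • b + r = t • b - q` with `r, q ≥ 0`; comparability within the columns of `L` lets
each bound absorb a `ρ⁻²` share of `L *ᵥ (r + q) = (t - s) • L *ᵥ b`. -/
theorem exists_mulVec_mem_Icc_smul_of_mem_Icc_smul (hL : ∀ i j, 0 < L i j) (hρ0 : 0 < ρ)
    (hρ : ∀ i j k, L i k ≤ ρ * L j k) {a b : n → ℝ} (hb : 0 ≤ b) (hb0 : b ≠ 0) {s t : ℝ}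
    (hab : a ∈ Icc (s • b) (t • b)) :
    ∃ s' t', t' - s' = (1 - (ρ ^ 2)⁻¹) * (t - s) ∧
      L *ᵥ a ∈ Icc (s' • (L *ᵥ b)) (t' • (L *ᵥ b)) := by
  obtain ⟨j, -⟩ := Function.ne_iff.1 hb0
  have hbj := mulVec_pos hL hb hb0 j
  have hlo := smul_mulVec_le_mulVec (fun i j => (hL i j).le) hρ0 hρ hb (sub_nonneg.2 hab.1) hbj
  have hhi := smul_mulVec_le_mulVec (fun i j => (hL i j).le) hρ0 hρ hb (sub_nonneg.2 hab.2) hbj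
  rw [mulVec_sub, mulVec_smul] at hlo hhi
  refine ⟨_, _, ?_, by rw [add_smul]; exact le_sub_iff_add_le'.1 hlo,
    by rw [sub_smul]; exact le_sub_comm.1 hhi⟩
  simp only [Pi.sub_apply, Pi.smul_apply, smul_eq_mul]
  field_simp
  ring

end Matrix

theorem comp_mem_Icc_smul {ι κ : Type*} {a b : ι → ℝ} {s t : ℝ} (f : κ → ι)
    (h : a ∈ Icc (s • b) (t • b)) : a ∘ f ∈ Icc (s • (b ∘ f)) (t • (b ∘ f)) :=
  ⟨fun i => h.1 (f i), fun i => h.2 (f i)⟩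

theorem div_mem_Icc_of_mem_Icc_smul {ι : Type*} {a b : ι → ℝ} {s t : ℝ}
    (h : a ∈ Icc (s • b) (t • b)) {i : ι} (hi : 0 < b i) : a i / b i ∈ Icc s t :=
  ⟨(le_div_iff₀ hi).2 (h.1 i), (div_le_iff₀ hi).2 (h.2 i)⟩

theorem eq_smul_of_forall_mem_Icc {ι : Type*} {x y : ι → ℝ} {c κ G : ℝ} (hy : 0 ≤ y)
    (hκ0 : 0 ≤ κ) (hκ1 : κ < 1)
    (h : ∀ m : ℕ, ∃ s t, t - s ≤ κ ^ m * G ∧ c ∈ Icc s t ∧ x ∈ Icc (s • y) (t • y)) :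
    x = c • y := by
  funext i
  have hbound : ∀ m : ℕ, |x i - c * y i| ≤ κ ^ m * G * y i := fun m => by
    obtain ⟨s, t, hgap, ⟨hs, ht⟩, hxs, hxt⟩ := h m
    have hgap' := mul_le_mul_of_nonneg_right hgap (hy i)
    have hlo : s * y i ≤ x i := hxs i
    have hhi : x i ≤ t * y i := hxt i
    rw [abs_le]
    constructor <;> nlinarith [mul_le_mul_of_nonneg_right hs (hy i),
      mul_le_mul_of_nonneg_right ht (hy i)]
  have hlim : Tendsto (fun m => κ ^ m * G * y i) atTop (𝓝 0) := by
    simpa using ((tendsto_pow_atTop_nhds_zero_of_lt_one hκ0 hκ1).mul_const G).mul_const (y i)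
  have h0 := ge_of_tendsto hlim (Eventually.of_forall hbound)
  rw [Pi.smul_apply, smul_eq_mul, ← sub_eq_zero]
  exact abs_nonpos_iff.1 h0

section Sandwich

variable {n : Type*} [Fintype n] {L : Matrix n n ℝ} {ρ : ℝ} {x y : ℕ → n → ℝ}

theorem exists_mem_Icc_smul_sub_le (hL : ∀ i j, 0 < L i j) (hρ1 : 1 ≤ ρ)
    (hρ : ∀ i j k, L i k ≤ ρ * L j k) (hx : ∀ k, 0 ≤ x k) (hy : ∀ k, 0 ≤ y k)
    (hxL : ∀ k, x (2 * k) = L *ᵥ x (2 * k + 1)) (hyL : ∀ k, y (2 * k) = L *ᵥ y (2 * k + 1))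
    (hdown : ∀ {k k' : ℕ} {s t : ℝ}, k ≤ k' →
      x k' ∈ Icc (s • y k') (t • y k') → x k ∈ Icc (s • y k) (t • y k))
    {K : ℕ} (hyK : ∀ k, K ≤ k → y k ≠ 0) {i : n} (hi : 0 < y K i) (m : ℕ) :
    ∀ k, K ≤ k → ∃ s t, t - s ≤ (1 - (ρ ^ 2)⁻¹) ^ m * (ρ ^ 4 * (x K i / y K i)) ∧
      x (2 * k) ∈ Icc (s • y (2 * k)) (t • y (2 * k)) := by
  have hρ0 : 0 < ρ := zero_lt_one.trans_le hρ1
  induction m with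
  | zero =>
    intro k hk
    obtain ⟨s, hs0, hs⟩ := exists_mulVec_mem_Icc_smul hL hρ0 hρ (hx (2 * k + 1))
      (hy (2 * k + 1)) (hyK _ (by omega))
    rw [← hxL, ← hyL] at hs
    have hsc := (div_mem_Icc_of_mem_Icc_smul (hdown (by omega : K ≤ 2 * k) hs) hi).1
    refine ⟨s, ρ ^ 4 * s, ?_, hs⟩
    rw [pow_zero, one_mul]
    nlinarith [pow_pos hρ0 4]
  | succ m ih =>
    intro k hk
    obtain ⟨s, t, hgap, hst⟩ := ih (k + 1) (by omega)
    obtain ⟨s', t', hgap', hst'⟩ := exists_mulVec_mem_Icc_smul_of_mem_Icc_smul hL hρ0 hρ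
      (hy (2 * k + 1)) (hyK _ (by omega)) (hdown (by omega) hst)
    rw [← hxL, ← hyL] at hst'
    refine ⟨s', t', ?_, hst'⟩
    have hκ : 0 ≤ 1 - (ρ ^ 2)⁻¹ := sub_nonneg.2 (inv_le_one_of_one_le₀ (one_le_pow₀ hρ1))
    rw [hgap', pow_succ' (1 - (ρ ^ 2)⁻¹) m, mul_assoc]
    exact mul_le_mul_of_nonneg_left hgap hκ

/-- `x k` and `y k` play the roles of `u` and `v` at the recurring level `J k`. -/
theorem exists_forall_eq_smul (hL : ∀ i j, 0 < L i j) (hx : ∀ k, 0 ≤ x k) (hy : ∀ k, 0 ≤ y k)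
    (hxL : ∀ k, x (2 * k) = L *ᵥ x (2 * k + 1)) (hyL : ∀ k, y (2 * k) = L *ᵥ y (2 * k + 1))
    (hdown : ∀ {k k' : ℕ} {s t : ℝ}, k ≤ k' →
      x k' ∈ Icc (s • y k') (t • y k') → x k ∈ Icc (s • y k) (t • y k))
    {K : ℕ} (hyK : ∀ k, K ≤ k → y k ≠ 0) : ∃ c : ℝ, 0 ≤ c ∧ ∀ k, x k = c • y k := by
  obtain ⟨ρ, hρ1, hρ⟩ := exists_apply_le_mul_apply_of_pos hL
  obtain ⟨i, hi0⟩ := Function.ne_iff.1 (hyK K le_rfl)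
  have hi : 0 < y K i := (hy K i).lt_of_ne' hi0
  refine ⟨x K i / y K i, div_nonneg (hx K i) hi.le, fun k => ?_⟩
  have hκ0 : 0 ≤ 1 - (ρ ^ 2)⁻¹ := sub_nonneg.2 (inv_le_one_of_one_le₀ (one_le_pow₀ hρ1))
  have hκ1 : 1 - (ρ ^ 2)⁻¹ < 1 := sub_lt_self _ (by positivity)
  refine eq_smul_of_forall_mem_Icc (G := ρ ^ 4 * (x K i / y K i)) (hy k) hκ0 hκ1
    fun m => ?_
  obtain ⟨s, t, hgap, hst⟩ :=
    exists_mem_Icc_smul_sub_le hL hρ1 hρ hx hy hxL hyL hdown hyK hi m (K + k) (by omega)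
  exact ⟨s, t, hgap, div_mem_Icc_of_mem_Icc_smul (hdown (by omega) hst) hi,
    hdown (by omega) hst⟩

end Sandwich

section InverseSystem

variable {d : ℕ → ℕ} {A : ∀ j, (Fin (d (j + 1)) → ℝ) →ₗ[ℝ] (Fin (d j) → ℝ)}

theorem compFrom_apply_of_compatible {w : ∀ j, Fin (d j) → ℝ}
    (hw : ∀ j, A j (w (j + 1)) = w j) (i : ℕ) : ∀ k, compFrom d A i k (w (i + k)) = w i
  | 0 => rfl
  | k + 1 => (congrArg (compFrom d A i k) (hw (i + k))).trans (compFrom_apply_of_compatible hw i k)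

theorem eq_zero_of_le_of_compatible {w : ∀ j, Fin (d j) → ℝ}
    (hw : ∀ j, A j (w (j + 1)) = w j) {j j' : ℕ} (hjj' : j ≤ j') (h : w j' = 0) : w j = 0 := by
  induction hjj' using Nat.decreasingInduction with
  | self => exact h
  | of_succ k _ ih => rw [← hw k, ih, map_zero]

theorem le_of_le_of_compatible (hA : ∀ j, Monotone (A j)) {f g : ∀ j, Fin (d j) → ℝ}
    (hf : ∀ j, A j (f (j + 1)) = f j) (hg : ∀ j, A j (g (j + 1)) = g j) {j j' : ℕ}
    (hjj' : j ≤ j') (h : f j' ≤ g j') : f j ≤ g j := by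
  induction hjj' using Nat.decreasingInduction with
  | self => exact h
  | of_succ k _ ih => rw [← hf k, ← hg k]; exact hA k ih

theorem mem_Icc_smul_of_le_of_compatible (hA : ∀ j, Monotone (A j)) {u v : ∀ j, Fin (d j) → ℝ}
    (hu : ∀ j, A j (u (j + 1)) = u j) (hv : ∀ j, A j (v (j + 1)) = v j) {j j' : ℕ}
    (hjj' : j ≤ j') {s t : ℝ} (h : u j' ∈ Icc (s • v j') (t • v j')) :
    u j ∈ Icc (s • v j) (t • v j) := by
  have hsmul : ∀ c : ℝ, ∀ j, A j ((c • v) (j + 1)) = (c • v) j := fun c j => by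
    rw [Pi.smul_apply, map_smul, hv, Pi.smul_apply]
  exact ⟨le_of_le_of_compatible hA (hsmul s) hu hjj' h.1,
    le_of_le_of_compatible hA hu (hsmul t) hjj' h.2⟩

theorem comp_cast_eq_mulVec {J : ℕ → ℕ} {dd : ℕ} {L : Matrix (Fin dd) (Fin dd) ℝ}
    (hd : ∀ k, d (J k) = dd)
    (hrec : ∀ k : ℕ, ∃ m : ℕ, ∃ hm : J (2 * k) + m = J (2 * k + 1),
      ∀ v : Fin dd → ℝ,
        compFrom d A (J (2 * k)) m
            (fun i => v (Fin.cast ((congrArg d hm).trans (hd (2 * k + 1))) i))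
          = fun i => L.mulVec v (Fin.cast (hd (2 * k)) i))
    {w : ∀ j, Fin (d j) → ℝ} (hw : ∀ j, A j (w (j + 1)) = w j) (k : ℕ) :
    w (J (2 * k)) ∘ Fin.cast (hd (2 * k)).symm =
      L *ᵥ (w (J (2 * k + 1)) ∘ Fin.cast (hd (2 * k + 1)).symm) := by
  obtain ⟨m, hm, hL⟩ := hrec k
  have hcast : ∀ {a b : ℕ} (e : a = b), (fun i => w b (Fin.cast (congrArg d e) i)) = w a := by
    rintro a b rfl; rfl
  have h : compFrom d A (J (2 * k)) m (w (J (2 * k) + m)) = fun i =>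
      (L *ᵥ (w (J (2 * k + 1)) ∘ Fin.cast (hd (2 * k + 1)).symm)) (Fin.cast (hd (2 * k)) i) := by
    rw [← hcast hm]
    exact hL (w (J (2 * k + 1)) ∘ Fin.cast (hd (2 * k + 1)).symm)
  rw [compFrom_apply_of_compatible hw] at h
  funext i
  exact congrFun h (Fin.cast (hd (2 * k)).symm i)

end InverseSystem

/-- Let `(Λ_j, T_j)` be an inverse sequence where `Λ_j` is
the nonnegative cone in `ℝ^{d_j}` and each `T_j` (here `A j`) is a
nonnegative linear map, and suppose there is a strictly monotone sequence of
(depth) indices `J` with `d (J k) = dd` for all `k`, and a fixed positive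
`dd × dd` matrix `L` which equals the composition of the connecting maps from
level `J (2k+1)` down to level `J (2k)` for every `k`.  Then the inverse
limit of the cones is at most one-dimensional: any two of its elements are
nonnegative scalar multiples of a common element. -/
theorem recurring_positive_matrix_unique_ray (d : ℕ → ℕ)
    (A : ∀ j, (Fin (d (j + 1)) → ℝ) →ₗ[ℝ] (Fin (d j) → ℝ))
    (hA : ∀ j (v : Fin (d (j + 1)) → ℝ), (∀ i, 0 ≤ v i) → ∀ i, 0 ≤ A j v i)
    (dd : ℕ) (L : Matrix (Fin dd) (Fin dd) ℝ) (hLpos : ∀ i j, 0 < L i j)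
    (J : ℕ → ℕ) (hJ : StrictMono J) (hd : ∀ k, d (J k) = dd)
    (hrec : ∀ k : ℕ, ∃ m : ℕ, ∃ hm : J (2 * k) + m = J (2 * k + 1),
      ∀ v : Fin dd → ℝ,
        compFrom d A (J (2 * k)) m
            (fun i => v (Fin.cast ((congrArg d hm).trans (hd (2 * k + 1))) i))
          = fun i => L.mulVec v (Fin.cast (hd (2 * k)) i)) :
    ∀ u ∈ {w : ∀ j, Fin (d j) → ℝ |
        (∀ j i, 0 ≤ w j i) ∧ ∀ j, A j (w (j + 1)) = w j},
      ∀ v ∈ {w : ∀ j, Fin (d j) → ℝ |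
          (∀ j i, 0 ≤ w j i) ∧ ∀ j, A j (w (j + 1)) = w j},
        ∃ z ∈ {w : ∀ j, Fin (d j) → ℝ |
            (∀ j i, 0 ≤ w j i) ∧ ∀ j, A j (w (j + 1)) = w j},
          ∃ α β : ℝ, 0 ≤ α ∧ 0 ≤ β ∧ u = α • z ∧ v = β • z := by
  rintro u ⟨hu0, hu⟩ v ⟨hv0, hv⟩
  by_cases hv_zero : v = 0
  · exact ⟨u, ⟨hu0, hu⟩, 1, 0, zero_le_one, le_rfl, (one_smul ℝ u).symm, by
      rw [hv_zero, zero_smul]⟩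
  obtain ⟨K, hK⟩ := Function.ne_iff.1 hv_zero
  have hmono : ∀ j, Monotone (A j) := fun j => (monotone_iff_map_nonneg (A j)).2 (hA j)
  obtain ⟨c, hc0, hc⟩ := exists_forall_eq_smul hLpos
    (x := fun k => u (J k) ∘ Fin.cast (hd k).symm) (y := fun k => v (J k) ∘ Fin.cast (hd k).symm)
    (fun k i => hu0 _ _) (fun k i => hv0 _ _) (comp_cast_eq_mulVec hd hrec hu)
    (comp_cast_eq_mulVec hd hrec hv)
    (fun hkk' h => comp_mem_Icc_smul _ (mem_Icc_smul_of_le_of_compatible hmono hu hv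
      (hJ.monotone hkk') (comp_mem_Icc_smul (Fin.cast (hd _)) h)))
    (K := K) fun k hk h0 => hK (eq_zero_of_le_of_compatible hv (hk.trans hJ.le_apply)
      (funext fun i => congrFun h0 (Fin.cast (hd k) i)))
  refine ⟨v, ⟨hv0, hv⟩, c, 1, hc0, zero_le_one, ?_, (one_smul ℝ v).symm⟩
  have hw : ∀ j, A j ((u - c • v) (j + 1)) = (u - c • v) j := fun j => by
    simp only [Pi.sub_apply, Pi.smul_apply, map_sub, map_smul, hu, hv]
  funext j
  refine sub_eq_zero.1 (eq_zero_of_le_of_compatible hw (hJ.le_apply : j ≤ J j) ?_)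
  funext i
  exact sub_eq_zero.2 (congrFun (hc j) (Fin.cast (hd j) i))
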